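/- Let $G$ be a group, let $N$ be a normal subgroup of $G$, and let $M \subseteq G$ be a subgroup of finite index $i$ with $3 \nmid i$. Suppose that the quotient $G/N$ is isomorphic to the symmetric group $S_4$ or to the alternating group $A_4$, and that the image $\bar{M}$ of $M$ in $G/N$ contains a subgroup isomorphic to the Klein four-group $C_2 \times C_2$. Then $\bar{M}$ is isomorphic to $S_4$ or to $A_4$. -/

import Mathlib

/-!
The index of `M̄` in `G/N` divides the index of `M`, so `3` does not divide it either. As `3`
divides `|G/N| ∈ {12, 24}`, it must divide `|M̄|`; together with the Klein four-subgroup this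
gives `12 ∣ |M̄|`. Hence `M̄` has index dividing `2` in `S₄`, or index `1` in `A₄`, and the only
subgroup of index `2` of `S₄` is `A₄`.
-/

lemma Equiv.Perm.nat_card_fin_four : Nat.card (Equiv.Perm (Fin 4)) = 24 := by
  rw [Nat.card_perm, Nat.card_eq_fintype_card, Fintype.card_fin]; rfl

lemma nat_card_alternatingGroup_fin_four : Nat.card (alternatingGroup (Fin 4)) = 12 := by
  rw [nat_card_alternatingGroup, Nat.card_eq_fintype_card, Fintype.card_fin]; rfl

namespace Subgroup

variable {G : Type*} [Group G]

theorem dvd_card_of_coprime_index {H : Subgroup G} {n : ℕ} (hn : n ∣ Nat.card G)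
    (hcop : n.Coprime H.index) : n ∣ Nat.card H :=
  hcop.dvd_of_dvd_mul_right (H.card_mul_index ▸ hn)

theorem index_dvd_of_dvd_card {H : Subgroup G} {n m : ℕ} (hG : Nat.card G = n * m)
    (hn0 : 0 < n) (hn : n ∣ Nat.card H) : H.index ∣ m := by
  obtain ⟨k, hk⟩ := hn
  refine ⟨k, Nat.eq_of_mul_eq_mul_left hn0 ?_⟩
  rw [← hG, ← H.card_mul_index, hk]
  ring

end Subgroup

theorem Equiv.Perm.nonempty_mulEquiv_of_index_dvd_two {Q α : Type*} [Group Q] [Fintype α]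
    [DecidableEq α] (e : Q ≃* Equiv.Perm α) (H : Subgroup Q) (h : H.index ∣ 2) :
    Nonempty (H ≃* Equiv.Perm α) ∨ Nonempty (H ≃* alternatingGroup α) := by
  rw [← H.index_map_equiv e] at h
  rcases (Nat.dvd_prime Nat.prime_two).1 h with h1 | h2
  · exact .inl ⟨(e.subgroupMap H).trans
      ((MulEquiv.subgroupCongr (Subgroup.index_eq_one.1 h1)).trans Subgroup.topEquiv)⟩
  · exact .inr ⟨(e.subgroupMap H).trans
      (MulEquiv.subgroupCongr (Equiv.Perm.eq_alternatingGroup_of_index_eq_two h2))⟩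

theorem twelve_dvd_card_of_klein_le {Q : Type*} [Group Q] (hQ : 3 ∣ Nat.card Q)
    {H K : Subgroup Q} (hKH : K ≤ H)
    (eK : K ≃* Multiplicative (ZMod 2) × Multiplicative (ZMod 2)) (h3 : ¬ 3 ∣ H.index) :
    12 ∣ Nat.card H := by
  have h4 : 4 ∣ Nat.card H := by
    have hK : Nat.card K = 4 := by simp [Nat.card_congr eK.toEquiv]
    exact hK ▸ Subgroup.card_dvd_of_le hKH
  have h3' : 3 ∣ Nat.card H :=
    Subgroup.dvd_card_of_coprime_index hQ ((Nat.Prime.coprime_iff_not_dvd Nat.prime_three).2 h3)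
  exact Nat.Coprime.mul_dvd_of_dvd_of_dvd (by norm_num) h4 h3'

theorem sylow_base_change_general {G : Type*} [Group G] (N : Subgroup G) [N.Normal]
    (M : Subgroup G) (i : ℕ) (hi : M.index = i) (h3 : ¬ 3 ∣ i)
    (hquot : Nonempty ((G ⧸ N) ≃* Equiv.Perm (Fin 4)) ∨
      Nonempty ((G ⧸ N) ≃* alternatingGroup (Fin 4)))
    (Mbar : Subgroup (G ⧸ N)) (hMbar : Mbar = Subgroup.map (QuotientGroup.mk' N) M)
    (hklein : ∃ K : Subgroup (G ⧸ N), K ≤ Mbar ∧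
      Nonempty (K ≃* Multiplicative (ZMod 2) × Multiplicative (ZMod 2))) :
    Nonempty (Mbar ≃* Equiv.Perm (Fin 4)) ∨
      Nonempty (Mbar ≃* alternatingGroup (Fin 4)) := by
  obtain ⟨K, hKM, ⟨eK⟩⟩ := hklein
  have h3bar : ¬ 3 ∣ Mbar.index := fun h ↦ h3 <| h.trans <|
    hMbar ▸ hi ▸ M.index_map_dvd (QuotientGroup.mk'_surjective N)
  rcases hquot with ⟨⟨e⟩⟩ | ⟨⟨e⟩⟩
  · have hcard : Nat.card (G ⧸ N) = 12 * 2 := by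
      rw [Nat.card_congr e.toEquiv, Equiv.Perm.nat_card_fin_four]
    have h12 := twelve_dvd_card_of_klein_le (by rw [hcard]; norm_num) hKM eK h3bar
    exact Equiv.Perm.nonempty_mulEquiv_of_index_dvd_two e Mbar
      (Subgroup.index_dvd_of_dvd_card hcard (by norm_num) h12)
  · have hcard : Nat.card (G ⧸ N) = 12 * 1 := by
      rw [Nat.card_congr e.toEquiv, nat_card_alternatingGroup_fin_four]
    have h12 := twelve_dvd_card_of_klein_le (by rw [hcard]; norm_num) hKM eK h3bar
    have htop : Mbar = ⊤ := Subgroup.index_eq_one.1 <| Nat.dvd_one.1 <|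
      Subgroup.index_dvd_of_dvd_card hcard (by norm_num) h12
    exact .inr ⟨(MulEquiv.subgroupCongr htop).trans (Subgroup.topEquiv.trans e)⟩

/-- Sylow base change lemma (group-theoretic content): if `G/N ≅ S₄` or `A₄`,
`M ≤ G` has finite index `i` with `3 ∤ i`, and the image `M̄` of `M` in `G/N`
contains a copy of the Klein four-group, then `M̄ ≅ S₄` or `M̄ ≅ A₄`. -/
theorem sylow_base_change {G : Type*} [Group G] (N : Subgroup G) [N.Normal]
    (M : Subgroup G) (i : ℕ) (hi : M.index = i) (hfin : i ≠ 0) (h3 : ¬ 3 ∣ i)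
    (hquot : Nonempty ((G ⧸ N) ≃* Equiv.Perm (Fin 4)) ∨
      Nonempty ((G ⧸ N) ≃* alternatingGroup (Fin 4)))
    (Mbar : Subgroup (G ⧸ N)) (hMbar : Mbar = Subgroup.map (QuotientGroup.mk' N) M)
    (hklein : ∃ K : Subgroup (G ⧸ N), K ≤ Mbar ∧
      Nonempty (K ≃* Multiplicative (ZMod 2) × Multiplicative (ZMod 2))) :
    Nonempty (Mbar ≃* Equiv.Perm (Fin 4)) ∨
      Nonempty (Mbar ≃* alternatingGroup (Fin 4)) :=
  sylow_base_change_general N M i hi h3 hquot Mbar hMbar hklein
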